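/- Let d ≥ 3 and q small. The mean hitting time of {η(0) = 0} for the stationary FA1f process on ℤ^d satisfies E_μ(τ_0) ≥ C q^{−2}. -/

import Mathlib

open Finset ENNReal

noncomputable section

/-- The configuration `η` flipped at the site `x`. -/
def flipCfg {d : ℕ} (η : (Fin d → ℤ) → Bool) (x : Fin d → ℤ) : (Fin d → ℤ) → Bool :=
  fun y => if y = x then !(η y) else η y

/-- The nearest neighbours of a site `x ∈ ℤ^d`. -/
def latNbrs {d : ℕ} (x : Fin d → ℤ) : Finset (Fin d → ℤ) :=
  Finset.univ.biUnion fun i : Fin d =>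
    {Function.update x i (x i + 1), Function.update x i (x i - 1)}

/-- Extension of a configuration on a finite set of sites by fully occupied outside. -/
def extendCfg {d : ℕ} (s : Finset (Fin d → ℤ)) (η : ↥s → Bool) : (Fin d → ℤ) → Bool :=
  fun x => if h : x ∈ s then η ⟨x, h⟩ else true

/-- Expectation, under the product Bernoulli(1−q) measure (`true` = occupied, probability
`1−q`; `false` = empty, probability `q`), of a function depending only on the sites in the
finite set `s`. -/
def Eloc {d : ℕ} (q : ℝ) (s : Finset (Fin d → ℤ)) (g : ((Fin d → ℤ) → Bool) → ℝ) : ℝ :=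
  ∑ η : ↥s → Bool, (∏ v : ↥s, if η v then (1 - q) else q) * g (extendCfg s η)

/-- The FA1f constraint at `x` (as a real indicator): some nearest neighbour of `x` is empty. -/
def cInd {d : ℕ} (η : (Fin d → ℤ) → Bool) (x : Fin d → ℤ) : ℝ :=
  if ∃ y ∈ latNbrs x, η y = false then 1 else 0

/-- The FA1f Dirichlet form `D(f) = q(1−q) Σ_x μ(c_x (f(η^x) − f(η))²)` of a function `f`
depending only on the sites in the finite set `s`. -/
def Dform {d : ℕ} (q : ℝ) (s : Finset (Fin d → ℤ)) (f : ((Fin d → ℤ) → Bool) → ℝ) : ℝ :=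
  q * (1 - q) * ∑' x : Fin d → ℤ,
    Eloc q (s ∪ insert x (latNbrs x))
      (fun η => cInd η x * (f (flipCfg η x) - f η) ^ 2)

/-- `f` depends only on the sites in `s`. -/
def localOn {d : ℕ} (s : Finset (Fin d → ℤ)) (f : ((Fin d → ℤ) → Bool) → ℝ) : Prop :=
  ∀ η η' : (Fin d → ℤ) → Bool, (∀ x ∈ s, η x = η' x) → f η = f η'

/-- Variance of a function depending only on the sites in `s`. -/
def Varloc {d : ℕ} (q : ℝ) (s : Finset (Fin d → ℤ)) (f : ((Fin d → ℤ) → Bool) → ℝ) : ℝ :=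
  Eloc q s fun η => (f η - Eloc q s f) ^ 2

/-- The mean hitting time `E_μ(τ_0)` of the event `{η(0) = 0}` for the stationary FA1f
process on `ℤ^d`, via the variational principle
`E_μ(τ_0) = sup{μ(f)²/D(f) : f local, f = 0 on {η(0) = 0}}`. -/
def hitTime (d : ℕ) (q : ℝ) : ℝ≥0∞ :=
  sSup {r : ℝ≥0∞ | ∃ (s : Finset (Fin d → ℤ)) (f : ((Fin d → ℤ) → Bool) → ℝ),
    localOn s f ∧ (∀ η, η (fun _ => 0) = false → f η = 0) ∧
    r = ENNReal.ofReal (Eloc q s f ^ 2) / ENNReal.ofReal (Dform q s f)}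


/-!
The indicator `f(η) = η(0)` of an occupied origin is an admissible test function with
`μ(f) = 1 - q`. Flipping a site other than the origin does not change `f`, so
`D(f) = q(1-q) μ(c_0)`, and a union bound over the `2d` neighbours gives `μ(c_0) ≤ 2dq`.
Hence `E_μ(τ_0) ≥ (1-q)² / (2dq²(1-q)) ≳ q⁻²`.
-/

section

variable {d : ℕ} {q : ℝ} {s : Finset (Fin d → ℤ)}

lemma Eloc_mono (hq0 : 0 ≤ q) (hq1 : q ≤ 1) {g g' : ((Fin d → ℤ) → Bool) → ℝ}
    (h : ∀ η, g η ≤ g' η) : Eloc q s g ≤ Eloc q s g' := by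
  refine Finset.sum_le_sum fun η _ => mul_le_mul_of_nonneg_left (h _) ?_
  exact Finset.prod_nonneg fun v _ => by split <;> linarith

lemma Eloc_finset_sum {α : Type*} (t : Finset α) (g : α → ((Fin d → ℤ) → Bool) → ℝ) :
    Eloc q s (fun η => ∑ a ∈ t, g a η) = ∑ a ∈ t, Eloc q s (g a) := by
  simp only [Eloc, Finset.mul_sum]
  exact Finset.sum_comm

lemma Eloc_comp_eval {y : Fin d → ℤ} (hy : y ∈ s) (g : Bool → ℝ) :
    Eloc q s (fun η => g (η y)) = (1 - q) * g true + q * g false := by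
  classical
  set y₀ : ↥s := ⟨y, hy⟩
  let w : ↥s → Bool → ℝ := fun v b => (if b then 1 - q else q) * if v = y₀ then g b else 1
  have hterm : ∀ η : ↥s → Bool, (∏ v, if η v then 1 - q else q) * g (extendCfg s η y) =
      ∏ v, w v (η v) := by
    intro η
    rw [Finset.prod_mul_distrib, Finset.prod_ite_eq']
    simp [extendCfg, hy, y₀]
  calc Eloc q s (fun η => g (η y))
      = ∑ η : ↥s → Bool, ∏ v, w v (η v) := Finset.sum_congr rfl fun η _ => hterm η
    _ = ∏ v, (w v true + w v false) := by
      rw [← Fintype.prod_sum]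
      simp only [Fintype.sum_bool]
    _ = ∏ v, if v = y₀ then (1 - q) * g true + q * g false else 1 := by
      refine Finset.prod_congr rfl fun v _ => ?_
      by_cases hv : v = y₀ <;> simp [w, hv]
    _ = (1 - q) * g true + q * g false := by simp

lemma card_latNbrs_le (x : Fin d → ℤ) : (latNbrs x).card ≤ 2 * d := by
  refine Finset.card_biUnion_le.trans ?_
  calc ∑ i : Fin d, ({Function.update x i (x i + 1), Function.update x i (x i - 1)} :
        Finset (Fin d → ℤ)).card
      ≤ ∑ _i : Fin d, 2 := Finset.sum_le_sum fun i _ => Finset.card_le_two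
    _ = 2 * d := by simp [mul_comm]

lemma cInd_le_sum_empty (η : (Fin d → ℤ) → Bool) (x : Fin d → ℤ) :
    cInd η x ≤ ∑ y ∈ latNbrs x, if η y = false then 1 else 0 := by
  unfold cInd
  split_ifs with h
  · obtain ⟨y, hy, hyη⟩ := h
    calc (1 : ℝ) = if η y = false then 1 else 0 := by simp [hyη]
      _ ≤ _ := Finset.single_le_sum (f := fun y => if η y = false then (1 : ℝ) else 0)
          (fun _ _ => by positivity) hy
  · positivity

lemma Eloc_cInd_le (hq0 : 0 ≤ q) (hq1 : q ≤ 1) {t : Finset (Fin d → ℤ)}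
    {x : Fin d → ℤ} (ht : latNbrs x ⊆ t) : Eloc q t (cInd · x) ≤ 2 * d * q := by
  calc Eloc q t (cInd · x)
      ≤ Eloc q t (fun η => ∑ y ∈ latNbrs x, if η y = false then 1 else 0) :=
        Eloc_mono hq0 hq1 fun η => cInd_le_sum_empty η x
    _ = ∑ _y ∈ latNbrs x, q := by
        rw [Eloc_finset_sum]
        refine Finset.sum_congr rfl fun y hy => ?_
        simpa using Eloc_comp_eval (q := q) (ht hy) (fun b => if b = false then 1 else 0)
    _ = (latNbrs x).card * q := by rw [Finset.sum_const, nsmul_eq_mul]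
    _ ≤ 2 * d * q := by
        gcongr
        exact_mod_cast card_latNbrs_le x

def occ (x : Fin d → ℤ) (η : (Fin d → ℤ) → Bool) : ℝ :=
  if η x then 1 else 0

lemma localOn_occ (x : Fin d → ℤ) : localOn {x} (occ x) := fun η η' h => by
  simp only [occ, h x (Finset.mem_singleton_self x)]

lemma Eloc_occ {x : Fin d → ℤ} (hx : x ∈ s) : Eloc q s (occ x) = 1 - q :=
  (Eloc_comp_eval hx fun b => if b then 1 else 0).trans (by simp)

lemma Dform_occ (x : Fin d → ℤ) :
    Dform q s (occ x) = q * (1 - q) * Eloc q (s ∪ insert x (latNbrs x)) (cInd · x) := by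
  unfold Dform
  rw [tsum_eq_single x]
  · congr 2 with η
    cases h : η x <;> simp [occ, flipCfg, h]
  · intro y hy
    have hxy : x ≠ y := fun h => hy h.symm
    simp [Eloc, occ, flipCfg, hxy]

lemma Dform_occ_le (hq0 : 0 ≤ q) (hq1 : q ≤ 1) (x : Fin d → ℤ) :
    Dform q s (occ x) ≤ 2 * d * q ^ 2 * (1 - q) := by
  have hc := Eloc_cInd_le hq0 hq1 (t := s ∪ insert x (latNbrs x)) (x := x)
    (Finset.subset_union_right.trans' (Finset.subset_insert _ _))
  rw [Dform_occ x]
  have hq : 0 ≤ q * (1 - q) := mul_nonneg hq0 (by linarith)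
  nlinarith [mul_le_mul_of_nonneg_left hc hq]

-- `d + 1` rather than `d`: with `d = 0` the real division by `0` would make the bound `0`.
lemma ofReal_div_le_hitTime (hq0 : 0 < q) (hq1 : q < 1) :
    ENNReal.ofReal ((1 - q) / (2 * (d + 1) * q ^ 2)) ≤ hitTime d q := by
  let o : Fin d → ℤ := 0
  have hmem : ENNReal.ofReal ((1 - q) ^ 2) / ENNReal.ofReal (Dform q {o} (occ o)) ≤
      hitTime d q := by
    refine le_sSup ⟨{o}, occ o, localOn_occ o, fun η h => by simp [occ, o, Pi.zero_def, h], ?_⟩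
    rw [Eloc_occ (Finset.mem_singleton_self _)]
  refine le_trans ?_ hmem
  have hD : Dform q {o} (occ o) ≤ 2 * (d + 1) * q ^ 2 * (1 - q) := by
    refine (Dform_occ_le hq0.le hq1.le o).trans ?_
    gcongr; linarith
  have hpos : 0 < 2 * (d + 1) * q ^ 2 * (1 - q) := by
    have : 0 < 1 - q := by linarith
    positivity
  calc ENNReal.ofReal ((1 - q) / (2 * (d + 1) * q ^ 2))
      = ENNReal.ofReal ((1 - q) ^ 2) / ENNReal.ofReal (2 * (d + 1) * q ^ 2 * (1 - q)) := by
        rw [← ENNReal.ofReal_div_of_pos hpos]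
        congr 1
        field_simp [show 1 - q ≠ 0 by linarith]
    _ ≤ _ := ENNReal.div_le_div_left (ENNReal.ofReal_le_ofReal hD) _

end

theorem hitTime_ge_high_dim_general (d : ℕ) :
    ∃ C > (0 : ℝ), ∃ q₀ > (0 : ℝ), ∀ q : ℝ, 0 < q → q ≤ q₀ →
      ENNReal.ofReal (C * q ^ (-2 : ℤ)) ≤ hitTime d q := by
  refine ⟨1 / (4 * (d + 1)), by positivity, 1 / 2, by norm_num, fun q hq0 hq => ?_⟩
  refine le_trans (ENNReal.ofReal_le_ofReal ?_) (ofReal_div_le_hitTime hq0 (by linarith))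
  rw [zpow_neg, zpow_ofNat, ← div_eq_mul_inv, div_div,
    div_le_div_iff₀ (by positivity) (by positivity)]
  have : (0 : ℝ) ≤ (d + 1) * q ^ 2 := by positivity
  nlinarith

/-- in dimension `d ≥ 3`, `E_μ(τ_0) ≥ C q^{−2}` for small `q`. -/
theorem hitTime_ge_high_dim (d : ℕ) (hd : 3 ≤ d) :
    ∃ C > (0 : ℝ), ∃ q₀ > (0 : ℝ), ∀ q : ℝ, 0 < q → q ≤ q₀ →
      ENNReal.ofReal (C * q ^ (-2 : ℤ)) ≤ hitTime d q :=
  hitTime_ge_high_dim_general d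

end
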